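/- Let r > 0 and b(x) = (0, 2r x₁/(r²x₁²+1), (r²x₁²-1)/(r²x₁²+1)). Then for all x ∈ ℝ², the pointwise energy density identity holds: (1/2)|∇b|² + r·(b - e₃)·(∇×b) + (1/2)(b₃ - 1)² = 2(1-r²)/(r²x₁²+1)². -/

import Mathlib

/-- Scalar partial derivative in the first variable. -/
noncomputable def spd₁ (f : ℝ × ℝ → ℝ) (x : ℝ × ℝ) : ℝ := fderiv ℝ f x (1, 0)

/-- Scalar partial derivative in the second variable. -/
noncomputable def spd₂ (f : ℝ × ℝ → ℝ) (x : ℝ × ℝ) : ℝ := fderiv ℝ f x (0, 1)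

/-- The planar curl `∇ × n = (∂₁, ∂₂, 0)ᵗ × n` of a map `n : ℝ² → ℝ³`. -/
noncomputable def planarCurl (n : ℝ × ℝ → Fin 3 → ℝ) (x : ℝ × ℝ) : Fin 3 → ℝ :=
  ![ spd₂ (fun y => n y 2) x,
     -(spd₁ (fun y => n y 2) x),
     spd₁ (fun y => n y 1) x - spd₂ (fun y => n y 0) x]

/-- `|∇n|² = |∂₁n|² + |∂₂n|²`, the Dirichlet energy density. -/
noncomputable def gradSq (n : ℝ × ℝ → Fin 3 → ℝ) (x : ℝ × ℝ) : ℝ :=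
  (∑ i : Fin 3, (spd₁ (fun y => n y i) x) ^ 2)
    + ∑ i : Fin 3, (spd₂ (fun y => n y i) x) ^ 2

/-!
The field depends on `x₁` alone, so `∂₂b = 0`, `|∇b|² = |b'|²` and `∇ × b = (0, -b₃', b₂')`,
where `'` is the derivative of the profile `s ↦ b(s, ·)`. With `ρ = r²s² + 1` the profile is
`(0, 2rs/ρ, (r²s² - 1)/ρ)` with derivative `(0, 2r(1 - r²s²)/ρ², 4r²s/ρ²)`, and the identity
reduces to an equation between rational functions of `r` and `s`.
-/

section DependsOnFirst

variable {x : ℝ × ℝ}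

lemma HasDerivAt.hasFDerivAt_comp_fst {g : ℝ → ℝ} {g' : ℝ} (h : HasDerivAt g g' x.1) :
    HasFDerivAt (fun y : ℝ × ℝ => g y.1)
      ((ContinuousLinearMap.id ℝ ℝ).smulRight g' ∘L ContinuousLinearMap.fst ℝ ℝ ℝ) x :=
  h.hasFDerivAt.comp x hasFDerivAt_fst

lemma spd₁_comp_fst {g : ℝ → ℝ} {g' : ℝ} (h : HasDerivAt g g' x.1) :
    spd₁ (fun y => g y.1) x = g' := by
  simp [spd₁, h.hasFDerivAt_comp_fst.fderiv]

lemma spd₂_comp_fst {g : ℝ → ℝ} {g' : ℝ} (h : HasDerivAt g g' x.1) :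
    spd₂ (fun y => g y.1) x = 0 := by
  simp [spd₂, h.hasFDerivAt_comp_fst.fderiv]

variable {n : ℝ → Fin 3 → ℝ} {n' : Fin 3 → ℝ}

lemma gradSq_comp_fst (h : ∀ i, HasDerivAt (fun s => n s i) (n' i) x.1) :
    gradSq (fun y => n y.1) x = ∑ i, n' i ^ 2 := by
  simp [gradSq, spd₁_comp_fst (h _), spd₂_comp_fst (h _)]

lemma planarCurl_comp_fst (h : ∀ i, HasDerivAt (fun s => n s i) (n' i) x.1) :
    planarCurl (fun y => n y.1) x = ![0, -n' 2, n' 1] := by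
  simp [planarCurl, spd₁_comp_fst (h _), spd₂_comp_fst (h _)]

end DependsOnFirst

noncomputable def helixProfile (r s : ℝ) : Fin 3 → ℝ :=
  ![0, 2 * r * s / (r ^ 2 * s ^ 2 + 1), (r ^ 2 * s ^ 2 - 1) / (r ^ 2 * s ^ 2 + 1)]

noncomputable def helixProfileDeriv (r s : ℝ) : Fin 3 → ℝ :=
  ![0, 2 * r * (1 - r ^ 2 * s ^ 2) / (r ^ 2 * s ^ 2 + 1) ^ 2,
    4 * r ^ 2 * s / (r ^ 2 * s ^ 2 + 1) ^ 2]

lemma hasDerivAt_helixProfile (r s : ℝ) (i : Fin 3) :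
    HasDerivAt (fun t => helixProfile r t i) (helixProfileDeriv r s i) s := by
  have hρ : r ^ 2 * s ^ 2 + 1 ≠ 0 := by positivity
  have hsq : HasDerivAt (fun t : ℝ => r ^ 2 * t ^ 2) (r ^ 2 * (2 * s)) s := by
    simpa using (hasDerivAt_pow 2 s).const_mul (r ^ 2)
  fin_cases i
  · simpa [helixProfile, helixProfileDeriv] using hasDerivAt_const s (0 : ℝ)
  · refine (((hasDerivAt_id s).const_mul (2 * r)).div (hsq.add_const 1) hρ).congr_deriv ?_
    simp only [helixProfileDeriv, Fin.reduceFinMk, Matrix.cons_val, id_eq, mul_one]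
    ring
  · refine ((hsq.sub_const 1).div (hsq.add_const 1) hρ).congr_deriv ?_
    simp only [helixProfileDeriv, Fin.reduceFinMk, Matrix.cons_val]
    ring

theorem helical_energy_density_general (r : ℝ)
    (b : ℝ × ℝ → Fin 3 → ℝ)
    (hb : ∀ x : ℝ × ℝ, b x =
      ![ 0,
         2 * r * x.1 / (r ^ 2 * x.1 ^ 2 + 1),
         (r ^ 2 * x.1 ^ 2 - 1) / (r ^ 2 * x.1 ^ 2 + 1)]) :
    ∀ x : ℝ × ℝ,
      (1 / 2) * gradSq b x
        + r * dotProduct (b x - ![0, 0, 1]) (planarCurl b x)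
        + (1 / 2) * (b x 2 - 1) ^ 2
      = 2 * (1 - r ^ 2) / (r ^ 2 * x.1 ^ 2 + 1) ^ 2 := by
  intro x
  obtain rfl : b = fun y => helixProfile r y.1 := funext hb
  rw [gradSq_comp_fst (hasDerivAt_helixProfile r x.1),
    planarCurl_comp_fst (hasDerivAt_helixProfile r x.1)]
  simp only [helixProfile, helixProfileDeriv, Fin.sum_univ_three, dotProduct, Pi.sub_apply,
    Matrix.cons_val]
  field_simp
  ring

theorem helical_energy_density (r : ℝ) (hr : 0 < r)
    (b : ℝ × ℝ → Fin 3 → ℝ)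
    (hb : ∀ x : ℝ × ℝ, b x =
      ![ 0,
         2 * r * x.1 / (r ^ 2 * x.1 ^ 2 + 1),
         (r ^ 2 * x.1 ^ 2 - 1) / (r ^ 2 * x.1 ^ 2 + 1)]) :
    ∀ x : ℝ × ℝ,
      (1 / 2) * gradSq b x
        + r * dotProduct (b x - ![0, 0, 1]) (planarCurl b x)
        + (1 / 2) * (b x 2 - 1) ^ 2
      = 2 * (1 - r ^ 2) / (r ^ 2 * x.1 ^ 2 + 1) ^ 2 :=
  helical_energy_density_general r b hb
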